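/- Metric-DP of a finite-output mechanism built from a triangle-inequality density bound: let W be a finite set, φ : W → X an embedding into a metric space X, ε ≥ 0, and M a mechanism with output probabilities Pr[M(w) = ŵ] = Σ_{z ∈ Z} q_w(z)·s(z, ŵ) for a finite noise support Z, where q_w(z) = exp(-ε·dist(z, φ(w)))·c(z) with c(z) ≥ 0 a w-independent normalizing weight, and s(z, ŵ) ∈ [0,1] is a w-independent selection rule. Then for all w, w', ŵ: Pr[M(w) = ŵ] ≤ exp(ε·dist(φ(w), φ(w'))) · Pr[M(w') = ŵ]. -/

import Mathlib

/-!
By the triangle inequality, `exp (-ε d(z, φ w)) ≤ exp (ε d(φ w, φ w')) · exp (-ε d(z, φ w'))` for every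
noise value `z`, and this pointwise bound survives multiplication by the nonnegative weights `c z · s z ŵ`
and summation over `z`.
-/

open Finset

lemma Real.exp_neg_mul_dist_le {X : Type*} [PseudoMetricSpace X] {ε : ℝ} (hε : 0 ≤ ε) (z x x' : X) :
    Real.exp (-(ε * dist z x)) ≤ Real.exp (ε * dist x x') * Real.exp (-(ε * dist z x')) := by
  rw [← Real.exp_add, Real.exp_le_exp]
  nlinarith [dist_triangle z x x']

lemma Finset.sum_mul_le_mul_sum_mul {ι : Type*} (Z : Finset ι) {f g a : ι → ℝ} {K : ℝ}
    (hfg : ∀ z ∈ Z, f z ≤ K * g z) (ha : ∀ z ∈ Z, 0 ≤ a z) :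
    ∑ z ∈ Z, f z * a z ≤ K * ∑ z ∈ Z, g z * a z := by
  rw [mul_sum]
  refine sum_le_sum fun z hz => ?_
  rw [← mul_assoc]
  exact mul_le_mul_of_nonneg_right (hfg z hz) (ha z hz)

theorem stmt_7_general {W : Type*} {X : Type*} [MetricSpace X]
    (φ : W → X) (ε : ℝ) (hε : 0 ≤ ε)
    (Z : Finset X) (c : X → ℝ) (hc : ∀ z, 0 ≤ c z)
    (s : X → W → ℝ) (hs0 : ∀ z what, 0 ≤ s z what)
    (Pr : W → W → ℝ)
    (hPr : ∀ w what, Pr w what = ∑ z ∈ Z, Real.exp (-(ε * dist z (φ w))) * c z * s z what)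
    (w w' what : W) :
    Pr w what ≤ Real.exp (ε * dist (φ w) (φ w')) * Pr w' what := by
  rw [hPr, hPr]
  refine sum_mul_le_mul_sum_mul Z (fun z _ => ?_) (fun z _ => hs0 z what)
  rw [← mul_assoc]
  exact mul_le_mul_of_nonneg_right (Real.exp_neg_mul_dist_le hε z _ _) (hc z)

theorem stmt_7 {W : Type*} [Fintype W] {X : Type*} [MetricSpace X]
    (φ : W → X) (ε : ℝ) (hε : 0 ≤ ε)
    (Z : Finset X) (c : X → ℝ) (hc : ∀ z, 0 ≤ c z)
    (s : X → W → ℝ) (hs0 : ∀ z what, 0 ≤ s z what) (hs1 : ∀ z what, s z what ≤ 1)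
    (Pr : W → W → ℝ)
    (hPr : ∀ w what, Pr w what = ∑ z ∈ Z, Real.exp (-(ε * dist z (φ w))) * c z * s z what)
    (w w' what : W) :
    Pr w what ≤ Real.exp (ε * dist (φ w) (φ w')) * Pr w' what :=
  stmt_7_general φ ε hε Z c hc s hs0 Pr hPr w w' what
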